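/- arXiv:math/9805073 — 3 statements merged into one kernel-verified Lean document; each statement's English description precedes it below -/
import Mathlib

section
/- Let D be a Lebesgue-measurable subset of three-dimensional Euclidean space that is star-shaped with respect to a point x ∈ D, meaning that for every y ∈ D the segment from x to y is contained in D. Then for all radii 0 < r ≤ R, one has vol(D ∩ B(x,r)) · vol(B(x,R)) ≥ vol(D ∩ B(x,R)) · vol(B(x,r)); equivalently, the function r ↦ vol(D ∩ B(x,r)) / vol(B(x,r)) is non-increasing on (0,∞). -/
open MeasureTheory Metric Set

/-- Bishop–Gromov monotonicity for star-shaped sets in Euclidean 3-space: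
if `D` is measurable and star-shaped with respect to `x`, then for `0 < r ≤ R`,
`vol(D ∩ B(x,r)) · vol(B(x,R)) ≥ vol(D ∩ B(x,R)) · vol(B(x,r))`, i.e. the ratio
`vol(D ∩ B(x,r)) / vol(B(x,r))` is non-increasing in `r`. -/
theorem starShaped_ball_volume_ratio_antitone
    (D : Set (EuclideanSpace ℝ (Fin 3))) (hD : MeasurableSet D)
    (x : EuclideanSpace ℝ (Fin 3)) (hx : x ∈ D)
    (hstar : ∀ y ∈ D, segment ℝ x y ⊆ D)
    (r R : ℝ) (hr : 0 < r) (hrR : r ≤ R) :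
    volume (D ∩ ball x R) * volume (ball x r)
      ≤ volume (D ∩ ball x r) * volume (ball x R) := by
  have hR : (0 : ℝ) < R := hr.trans_le hrR
  set c : ℝ := r / R with hc_def
  have hc0 : 0 < c := div_pos hr hR
  have hc1 : c ≤ 1 := (div_le_one hR).2 hrR
  have hcR : c * R = r := div_mul_cancel₀ r hR.ne'
  -- the homothety of ratio c centered at x maps D ∩ ball x R into D ∩ ball x r
  have himg : AffineMap.homothety x c '' (D ∩ ball x R) ⊆ D ∩ ball x r := by
    rintro _ ⟨y, ⟨hyD, hyB⟩, rfl⟩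
    constructor
    · have : AffineMap.homothety x c y ∈ segment ℝ x y := by
        rw [segment_eq_image']
        exact ⟨c, ⟨hc0.le, hc1⟩, by simp [AffineMap.homothety_apply, vadd_eq_add]; abel⟩
      exact hstar y hyD this
    · rw [mem_ball] at hyB ⊢
      have : dist (AffineMap.homothety x c y) x = c * dist y x := by
        rw [dist_eq_norm, dist_eq_norm, AffineMap.homothety_apply, vsub_eq_sub, vadd_eq_add,
          show c • (y - x) + x - x = c • (y - x) by abel, norm_smul,
          Real.norm_eq_abs, abs_of_pos hc0]
      calc dist (AffineMap.homothety x c y) x = c * dist y x := this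
        _ < c * R := by exact (mul_lt_mul_iff_right₀ hc0).2 hyB
        _ = r := hcR
  have key : ENNReal.ofReal (c ^ 3) * volume (D ∩ ball x R)
      ≤ volume (D ∩ ball x r) := by
    calc ENNReal.ofReal (c ^ 3) * volume (D ∩ ball x R)
        = volume (AffineMap.homothety x c '' (D ∩ ball x R)) := by
          rw [Measure.addHaar_image_homothety]
          congr 2
          rw [finrank_euclideanSpace, Fintype.card_fin, abs_of_pos (pow_pos hc0 3)]
      _ ≤ volume (D ∩ ball x r) := measure_mono himg
  have hballr : volume (ball x r) = ENNReal.ofReal (c ^ 3) * volume (ball x R) := by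
    rw [← hcR, Measure.addHaar_ball_mul_of_pos volume x hc0 R]
    rw [finrank_euclideanSpace, Fintype.card_fin]
    simp [Measure.addHaar_ball_center]
  calc volume (D ∩ ball x R) * volume (ball x r)
      = (ENNReal.ofReal (c ^ 3) * volume (D ∩ ball x R)) * volume (ball x R) := by
        rw [hballr]; ring
    _ ≤ volume (D ∩ ball x r) * volume (ball x R) :=
        mul_le_mul_left key _
end

section
/- Let C be a metric space and a : C → ℝ a function with a(x) > 0 for all x and a(x) ≤ a(y) + d(x,y) for all x, y ∈ C, and set r(x) = min(1, a(x)/8). Let F ⊆ C be a finite set with the property that for every y ∈ C there exists x ∈ F such that the balls B(y, r(y)/4) and B(x, r(x)/4) intersect. Then the balls B(x, (2/3)·r(x)) for x ∈ F cover C. -/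
open Metric

/-- Lemma 4.4 of Chapter V (Gromov): for a positive 1-Lipschitz function `a`
on a metric space, setting `r x = min 1 (a x / 8)`, if `F` is a finite set of
points such that every `y` has a quarter-radius ball meeting the
quarter-radius ball of some point of `F` (maximality), then the balls
`B(x, (2/3) r x)`, `x ∈ F`, cover the whole space. -/
theorem cover_of_maximal_family {C : Type*} [MetricSpace C] (a : C → ℝ)
    (hpos : ∀ x, 0 < a x) (hlip : ∀ x y, a x ≤ a y + dist x y)
    (F : Finset C)
    (hmax : ∀ y : C, ∃ x ∈ F,
      (ball y (min 1 (a y / 8) / 4) ∩ ball x (min 1 (a x / 8) / 4)).Nonempty) :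
    ∀ y : C, ∃ x ∈ F, y ∈ ball x (2 / 3 * min 1 (a x / 8)) := by
  intro y
  obtain ⟨x, hxF, z, hz1, hz2⟩ := hmax y
  refine ⟨x, hxF, ?_⟩
  simp only [mem_ball] at hz1 hz2 ⊢
  rw [dist_comm] at hz1 hz2
  rw [dist_comm x z] at hz2
  have hd : dist y x < min 1 (a y / 8) / 4 + min 1 (a x / 8) / 4 := by
    calc dist y x ≤ dist y z + dist z x := dist_triangle y z x
    _ < _ := by linarith
  have hry1 : min 1 (a y / 8) ≤ 1 := min_le_left _ _
  have hry2 : min 1 (a y / 8) ≤ a y / 8 := min_le_right _ _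
  have hay : a y ≤ a x + dist y x := hlip y x
  have hpx := hpos x
  rcases min_cases 1 (a x / 8) with ⟨h1, h2⟩ | ⟨h1, h2⟩ <;> rw [h1] at hd ⊢ <;> linarith
end

section
/- Let L₁ and L₂ be two distinct lines (one-dimensional affine subspaces) in three-dimensional Euclidean space. Then the set of points equidistant from L₁ and L₂, namely {x : dist(x, L₁) = dist(x, L₂)}, has Lebesgue measure zero. -/
/-!
For a line through `p` with unit direction `u`, `dist(x, L)² = ‖x - p‖² - ⟪x - p, u⟫²`, so the
equidistant set is the zero set of a polynomial of degree at most two. Along every line of a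
suitable direction `v` this polynomial restricts to a nonzero polynomial in one variable, with
finitely many roots, and Fubini gives measure zero. For nonparallel lines take `v = u₂`: the
coefficient of `t²` is `1 - ⟪u₁, u₂⟫² ≠ 0`. For distinct parallel lines the quadratic terms cancel;
take `v` the component of `p₂ - p₁` orthogonal to `u`, so that the coefficient of `t` is `2‖v‖²`.
-/

open MeasureTheory Metric Polynomial Submodule
open scoped RealInnerProductSpace

theorem finite_setOf_quadratic_eq_zero {R : Type*} [CommRing R] [IsDomain R] {c₀ c₁ c₂ : R}
    (h : c₁ ≠ 0 ∨ c₂ ≠ 0) : {t : R | c₀ + c₁ * t + c₂ * t ^ 2 = 0}.Finite := by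
  have hP : (C c₀ + C c₁ * X + C c₂ * X ^ 2 : R[X]) ≠ 0 := by
    intro hP
    have h₁ := congrArg (coeff · 1) hP
    have h₂ := congrArg (coeff · 2) hP
    simp [coeff_C] at h₁ h₂
    tauto
  refine (finite_setOfPred_isRoot hP).subset fun t ht => ?_
  simpa using ht

theorem addHaar_eq_zero_of_forall_volume_setOf_add_smul_mem {E : Type*} [NormedAddCommGroup E]
    [NormedSpace ℝ E] [MeasurableSpace E] [BorelSpace E] [FiniteDimensional ℝ E]
    (μ : Measure E) [μ.IsAddHaarMeasure] {s : Set E} (hs : MeasurableSet s) (v : E)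
    (h : ∀ a, volume {t : ℝ | a + t • v ∈ s} = 0) : μ s = 0 := by
  have := ae_mem_of_ae_add_linearMap_mem ((LinearMap.lsmul ℝ E).flip v) volume μ hs.compl
    fun a => ae_iff.2 (by simpa using h a)
  simpa [ae_iff] using this

variable {V : Type*} [NormedAddCommGroup V] [InnerProductSpace ℝ V]

theorem AffineSubspace.exists_unit_direction_of_finrank_eq_one {L : AffineSubspace ℝ V}
    (h : Module.finrank ℝ L.direction = 1) :
    ∃ p ∈ L, ∃ u : V, ‖u‖ = 1 ∧ L.direction = span ℝ {u} := by
  have : FiniteDimensional ℝ L.direction := Module.finite_of_finrank_eq_succ h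
  obtain ⟨⟨v, hvL⟩, hv⟩ := Module.finrank_pos_iff_exists_ne_zero.1 (h ▸ one_pos)
  replace hv : v ≠ 0 := by simpa using hv
  obtain ⟨p, hp⟩ := L.nonempty_iff_ne_bot.2 (by rintro rfl; simp_all)
  refine ⟨p, hp, ‖v‖⁻¹ • v, norm_smul_inv_norm hv, (eq_of_le_of_finrank_eq ?_ ?_).symm⟩
  · exact (span_singleton_le_iff_mem _ _).2 (L.direction.smul_mem _ hvL)
  · rw [h, finrank_span_singleton (by simpa using hv)]

def lineSqDist (p u x : V) : ℝ := ‖x - p‖ ^ 2 - ⟪x - p, u⟫ ^ 2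

theorem lineSqDist_add_smul (p u a v : V) (t : ℝ) :
    lineSqDist p u (a + t • v) = lineSqDist p u a
      + 2 * (⟪a - p, v⟫ - ⟪a - p, u⟫ * ⟪v, u⟫) * t + (‖v‖ ^ 2 - ⟪v, u⟫ ^ 2) * t ^ 2 := by
  rw [lineSqDist, lineSqDist, show a + t • v - p = (a - p) + t • v by abel]
  simp only [norm_add_sq_real, inner_add_left, real_inner_smul_left, real_inner_smul_right,
    norm_smul, mul_pow, Real.norm_eq_abs, sq_abs]
  ring

theorem continuous_lineSqDist (p u : V) : Continuous (lineSqDist p u) := by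
  unfold lineSqDist
  fun_prop

theorem infDist_sq_eq_lineSqDist {L : AffineSubspace ℝ V} {p u : V} (hp : p ∈ L)
    (hu : ‖u‖ = 1) (hL : L.direction = span ℝ {u}) (x : V) :
    infDist x L ^ 2 = lineSqDist p u x := by
  have hmem : ∀ y, y ∈ L ↔ ∃ t : ℝ, t • u + p = y := fun y => by
    rw [← AffineSubspace.vsub_right_mem_direction_iff_mem hp, hL, mem_span_singleton]
    simp only [vsub_eq_sub, eq_sub_iff_add_eq]
  have hdist : ∀ t : ℝ, dist x (t • u + p) ^ 2 = lineSqDist p u x + (t - ⟪x - p, u⟫) ^ 2 := by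
    intro t
    rw [dist_eq_norm, show x - (t • u + p) = (x - p) - t • u by abel, norm_sub_sq_real,
      real_inner_smul_right, norm_smul, mul_pow, hu, Real.norm_eq_abs, sq_abs, lineSqDist]
    ring
  have hfoot : ⟪x - p, u⟫ • u + p ∈ L := (hmem _).2 ⟨_, rfl⟩
  have hinf : infDist x L = dist x (⟪x - p, u⟫ • u + p) := by
    refine le_antisymm (infDist_le_dist_of_mem hfoot) ((le_infDist ⟨_, hfoot⟩).2 ?_)
    rintro _ hy
    obtain ⟨t, rfl⟩ := (hmem _).1 hy
    refine (pow_le_pow_iff_left₀ dist_nonneg dist_nonneg two_ne_zero).1 ?_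
    rw [hdist, hdist]
    nlinarith
  rw [hinf, hdist, sub_self]
  ring

theorem setOf_infDist_eq_eq_setOf_lineSqDist_eq {L₁ L₂ : AffineSubspace ℝ V} {p₁ p₂ u₁ u₂ : V}
    (hp₁ : p₁ ∈ L₁) (hu₁ : ‖u₁‖ = 1) (hL₁ : L₁.direction = span ℝ {u₁})
    (hp₂ : p₂ ∈ L₂) (hu₂ : ‖u₂‖ = 1) (hL₂ : L₂.direction = span ℝ {u₂}) :
    {x | infDist x (L₁ : Set V) = infDist x (L₂ : Set V)}
      = {x | lineSqDist p₁ u₁ x = lineSqDist p₂ u₂ x} := by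
  ext x
  simp only [Set.mem_ofPred_eq, ← infDist_sq_eq_lineSqDist hp₁ hu₁ hL₁,
    ← infDist_sq_eq_lineSqDist hp₂ hu₂ hL₂]
  exact (pow_left_inj₀ infDist_nonneg infDist_nonneg two_ne_zero).symm

variable [MeasurableSpace V] [BorelSpace V]

theorem measurableSet_setOf_lineSqDist_eq (p₁ u₁ p₂ u₂ : V) :
    MeasurableSet {x | lineSqDist p₁ u₁ x = lineSqDist p₂ u₂ x} :=
  (isClosed_eq (continuous_lineSqDist p₁ u₁) (continuous_lineSqDist p₂ u₂)).measurableSet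

variable [FiniteDimensional ℝ V] (μ : Measure V) [μ.IsAddHaarMeasure]

theorem addHaar_setOf_lineSqDist_eq_eq_zero {p₁ u₁ p₂ u₂ : V} (v : V)
    -- half the `t`- and the `t²`-coefficient of
    -- `lineSqDist p₁ u₁ (a + t • v) - lineSqDist p₂ u₂ (a + t • v)`
    (h : ∀ a, ⟪p₂ - p₁, v⟫ - ⟪a - p₁, u₁⟫ * ⟪v, u₁⟫ + ⟪a - p₂, u₂⟫ * ⟪v, u₂⟫ ≠ 0 ∨
      ⟪v, u₂⟫ ^ 2 - ⟪v, u₁⟫ ^ 2 ≠ 0) :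
    μ {x | lineSqDist p₁ u₁ x = lineSqDist p₂ u₂ x} = 0 := by
  refine addHaar_eq_zero_of_forall_volume_setOf_add_smul_mem μ
    (measurableSet_setOf_lineSqDist_eq p₁ u₁ p₂ u₂) v fun a => ?_
  have hroots := finite_setOf_quadratic_eq_zero (c₀ := lineSqDist p₁ u₁ a - lineSqDist p₂ u₂ a)
    ((h a).imp_left (mul_ne_zero two_ne_zero))
  refine measure_mono_null (fun t ht => ?_) (hroots.measure_zero _)
  have hpa : ⟪a - p₁, v⟫ - ⟪a - p₂, v⟫ = ⟪p₂ - p₁, v⟫ := by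
    rw [← inner_sub_left, sub_sub_sub_cancel_left]
  simp only [Set.mem_ofPred_eq, lineSqDist_add_smul] at ht ⊢
  linear_combination ht - 2 * t * hpa

theorem addHaar_setOf_lineSqDist_eq_eq_zero_of_notMem_span {u₁ u₂ : V} (hu₁ : ‖u₁‖ = 1)
    (hu₂ : ‖u₂‖ = 1) (hu : u₂ ∉ span ℝ {u₁}) (p₁ p₂ : V) :
    μ {x | lineSqDist p₁ u₁ x = lineSqDist p₂ u₂ x} = 0 := by
  refine addHaar_setOf_lineSqDist_eq_eq_zero μ u₂ fun _ => Or.inr ?_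
  rw [real_inner_self_eq_norm_sq, hu₂, real_inner_comm]
  intro h
  have hu₁₀ : u₁ ≠ 0 := by rintro rfl; simp at hu₁
  have hu₂₀ : u₂ ≠ 0 := by rintro rfl; simp at hu₂
  obtain ⟨r, -, rfl⟩ := (norm_inner_eq_norm_iff (𝕜 := ℝ) hu₁₀ hu₂₀).1 (by
    rw [hu₁, hu₂, Real.norm_eq_abs, one_mul, ← sq_eq_sq₀ (abs_nonneg _) zero_le_one, sq_abs]
    linarith)
  exact hu (smul_mem _ _ (mem_span_singleton_self u₁))

theorem addHaar_setOf_lineSqDist_eq_eq_zero_of_sub_notMem_span {u : V} (hu : ‖u‖ = 1)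
    {p₁ p₂ : V} (hp : p₂ - p₁ ∉ span ℝ {u}) :
    μ {x | lineSqDist p₁ u x = lineSqDist p₂ u x} = 0 := by
  set w := (p₂ - p₁) - ⟪p₂ - p₁, u⟫ • u
  have hwu : ⟪w, u⟫ = 0 := by
    simp [w, inner_sub_left, real_inner_smul_left, hu]
  have hw₀ : w ≠ 0 := fun hw₀ => hp <| mem_span_singleton.2 ⟨_, (sub_eq_zero.1 hw₀).symm⟩
  have hw : ⟪p₂ - p₁, w⟫ ≠ 0 := by
    have hdecomp : p₂ - p₁ = w + ⟪p₂ - p₁, u⟫ • u := (sub_add_cancel _ _).symm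
    rw [hdecomp, inner_add_left, real_inner_smul_left, real_inner_comm w u, hwu, mul_zero, add_zero,
      real_inner_self_eq_norm_sq]
    positivity
  refine addHaar_setOf_lineSqDist_eq_eq_zero μ w fun _ => Or.inl ?_
  simpa [hwu] using hw

/-- The set of points of Euclidean 3-space equidistant from two distinct
lines (one-dimensional affine subspaces) has Lebesgue measure zero. -/
theorem volume_equidistant_set_of_two_lines
    (L₁ L₂ : AffineSubspace ℝ (EuclideanSpace ℝ (Fin 3)))
    (h₁ : Module.finrank ℝ L₁.direction = 1)
    (h₂ : Module.finrank ℝ L₂.direction = 1)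
    (hne : L₁ ≠ L₂) :
    volume {x : EuclideanSpace ℝ (Fin 3) |
      Metric.infDist x (L₁ : Set (EuclideanSpace ℝ (Fin 3)))
        = Metric.infDist x (L₂ : Set (EuclideanSpace ℝ (Fin 3)))} = 0 := by
  obtain ⟨p₁, hp₁, u₁, hu₁, hL₁⟩ := L₁.exists_unit_direction_of_finrank_eq_one h₁
  obtain ⟨p₂, hp₂, u₂, hu₂, hL₂⟩ := L₂.exists_unit_direction_of_finrank_eq_one h₂
  by_cases hu : u₂ ∈ span ℝ {u₁}
  · have hL₂' : L₂.direction = span ℝ {u₁} := hL₂.trans <|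
      eq_of_le_of_finrank_eq ((span_singleton_le_iff_mem _ _).2 hu) (by rw [← hL₁, ← hL₂, h₁, h₂])
    have hp : p₂ - p₁ ∉ span ℝ {u₁} := fun hp => hne <|
      AffineSubspace.ext_of_direction_eq (hL₁.trans hL₂'.symm)
        ⟨p₂, (AffineSubspace.vsub_right_mem_direction_iff_mem hp₁ p₂).1 (hL₁ ▸ hp), hp₂⟩
    rw [setOf_infDist_eq_eq_setOf_lineSqDist_eq hp₁ hu₁ hL₁ hp₂ hu₁ hL₂']
    exact addHaar_setOf_lineSqDist_eq_eq_zero_of_sub_notMem_span volume hu₁ hp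
  · rw [setOf_infDist_eq_eq_setOf_lineSqDist_eq hp₁ hu₁ hL₁ hp₂ hu₂ hL₂]
    exact addHaar_setOf_lineSqDist_eq_eq_zero_of_notMem_span volume hu₁ hu₂ hu p₁ p₂
end
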